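/- arXiv:2508.19561 — 2 statements merged into one kernel-verified Lean document; each statement's English description precedes it below -/
import Mathlib

section
/- Let α > 0, γ > 0 and c ∈ ℝ with c² > α², and set κ = √( α / (2(c² − α²)) ). Then the function u(x,t) = √(α/γ) · tanh( κ (x − c t) ) satisfies the cubic nonlinear Klein–Gordon equation u_tt − α² u_xx + α u − γ u³ = 0 for all (x,t) ∈ ℝ². -/
/-!
The kink is a traveling wave `u(x,t) = φ(x - ct)`, so `u_tt - α² u_xx = (c² - α²) φ''` and the
equation reduces to the ODE `(c² - α²) φ'' + α φ - γ φ³ = 0` for `φ(ξ) = A tanh(κξ)`. Since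
`tanh'' = 2 tanh³ - 2 tanh`, the ODE splits into a linear and a cubic part in `tanh(κξ)`, which
cancel exactly when `2κ²(c² - α²) = α` and `γA² = α`.
-/

open Real

theorem Real.hasDerivAt_tanh (x : ℝ) : HasDerivAt tanh (1 - tanh x ^ 2) x := by
  have hcosh : cosh x ≠ 0 := (cosh_pos x).ne'
  have h := (hasDerivAt_sinh x).div (hasDerivAt_cosh x) hcosh
  rw [show sinh / cosh = tanh from funext fun y => (tanh_eq_sinh_div_cosh y).symm] at h
  refine h.congr_deriv ?_
  rw [tanh_eq_sinh_div_cosh]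
  field_simp

theorem Real.deriv_tanh : deriv tanh = fun x => 1 - tanh x ^ 2 :=
  funext fun x => (hasDerivAt_tanh x).deriv

theorem Real.deriv_deriv_tanh (x : ℝ) : deriv (deriv tanh) x = 2 * tanh x ^ 3 - 2 * tanh x := by
  rw [deriv_tanh]
  exact ((hasDerivAt_const x 1).sub ((hasDerivAt_tanh x).pow 2)).deriv.trans (by ring)

section TravelingWave

variable (φ : ℝ → ℝ)

theorem deriv_comp_sub_mul (x c : ℝ) :
    deriv (fun s => φ (x - c * s)) = fun s => -c * deriv φ (x - c * s) := by
  funext s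
  rw [deriv_comp_mul_left c (fun y => φ (x - y)), deriv_comp_const_sub, smul_eq_mul]
  ring

theorem deriv_deriv_comp_sub_mul (x c t : ℝ) :
    deriv (deriv fun s => φ (x - c * s)) t = c ^ 2 * deriv (deriv φ) (x - c * t) := by
  rw [deriv_comp_sub_mul, deriv_const_mul_field', deriv_comp_sub_mul]
  ring

theorem deriv_deriv_comp_sub_const (x a : ℝ) :
    deriv (deriv fun y => φ (y - a)) x = deriv (deriv φ) (x - a) := by
  rw [funext fun y => deriv_comp_sub_const φ a y, deriv_comp_sub_const]

end TravelingWave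

theorem deriv_const_mul_comp_mul (f : ℝ → ℝ) (A κ : ℝ) :
    deriv (fun ξ => A * f (κ * ξ)) = fun ξ => A * κ * deriv f (κ * ξ) := by
  funext ξ
  rw [deriv_const_mul_field']
  beta_reduce
  rw [deriv_comp_mul_left κ f, smul_eq_mul, mul_assoc]

theorem deriv_deriv_const_mul_tanh_mul (A κ ξ : ℝ) :
    deriv (deriv fun ξ => A * tanh (κ * ξ)) ξ
      = A * κ ^ 2 * (2 * tanh (κ * ξ) ^ 3 - 2 * tanh (κ * ξ)) := by
  rw [deriv_const_mul_comp_mul, deriv_const_mul_comp_mul]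
  beta_reduce
  rw [deriv_deriv_tanh]
  ring

theorem kink_profile_ode (α γ c ξ : ℝ) (hα : 0 ≤ α) (hγ : 0 < γ) (hc : α ^ 2 < c ^ 2) :
    let φ : ℝ → ℝ := fun ξ => √(α / γ) * tanh (√(α / (2 * (c ^ 2 - α ^ 2))) * ξ)
    (c ^ 2 - α ^ 2) * deriv (deriv φ) ξ + α * φ ξ - γ * φ ξ ^ 3 = 0 := by
  intro φ
  have hwave : 0 < c ^ 2 - α ^ 2 := by linarith
  have hκ : √(α / (2 * (c ^ 2 - α ^ 2))) ^ 2 * (2 * (c ^ 2 - α ^ 2)) = α := by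
    rw [sq_sqrt (by positivity)]
    field_simp
  have hA : √(α / γ) ^ 2 * γ = α := by
    rw [sq_sqrt (by positivity)]
    field_simp
  simp only [φ, deriv_deriv_const_mul_tanh_mul]
  set T := tanh (√(α / (2 * (c ^ 2 - α ^ 2))) * ξ)
  linear_combination (-(√(α / γ) * T ^ 3)) * hA + √(α / γ) * (T ^ 3 - T) * hκ

/-- The traveling kink `u(x,t) = √(α/γ) tanh(κ(x − ct))` with
`κ = √(α/(2(c² − α²)))` solves the cubic nonlinear Klein–Gordon equation
`u_tt − α² u_xx + α u − γ u³ = 0` on all of `ℝ²`. -/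
theorem klein_gordon_kink_solution
    (α γ c : ℝ) (hα : 0 < α) (hγ : 0 < γ) (hc : α ^ 2 < c ^ 2) :
    let κ := Real.sqrt (α / (2 * (c ^ 2 - α ^ 2)))
    let u : ℝ → ℝ → ℝ := fun x t => Real.sqrt (α / γ) * Real.tanh (κ * (x - c * t))
    ∀ x t : ℝ,
      deriv (deriv (fun s => u x s)) t
        - α ^ 2 * deriv (deriv (fun y => u y t)) x
        + α * u x t - γ * (u x t) ^ 3 = 0 := by
  intro κ u x t
  let φ : ℝ → ℝ := fun ξ => √(α / γ) * tanh (κ * ξ)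
  have hu_tt : deriv (deriv fun s => u x s) t = c ^ 2 * deriv (deriv φ) (x - c * t) :=
    deriv_deriv_comp_sub_mul φ x c t
  have hu_xx : deriv (deriv fun y => u y t) x = deriv (deriv φ) (x - c * t) :=
    deriv_deriv_comp_sub_const φ x (c * t)
  rw [hu_tt, hu_xx]
  linear_combination kink_profile_ode α γ c (x - c * t) hα.le hγ hc
end

section
/- Let 0 < γ < 1 and set s = √(1 − γ²). Then the kink–antikink function u(x,t) = 4 · arctan( sinh( γ t / s ) / ( γ · cosh( x / s ) ) ) satisfies the Sine-Gordon equation u_tt − u_xx + sin(u) = 0 for all (x,t) ∈ ℝ². -/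
/-!
Write `u = 4 arctan H` with `H = sinh (γ t / s) / (γ cosh (x / s))`. For a profile `h`,
`(4 arctan h)'' = 4 (h'' (1 + h²) - 2 h h'²) / (1 + h²)²`, and both one-variable slices of `H`
(`sinh (a t) / c` in time, `k / cosh (b x)` in space) turn this into
`4 κ² H (1 - H² - 2 / c²) / (1 + H²)²`, with `κ = γ / s`, `c = γ cosh (x / s)` in time and
`κ = 1 / s`, `c = cosh (x / s)` in space. Since `(γ / s)² / γ² = (1 / s)²` the `2 / c²` terms cancel
in `u_tt - u_xx`, and since `(γ / s)² - (1 / s)² = -1` what is left is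
`-4 H (1 - H²) / (1 + H²)² = -sin (4 arctan H)`.
-/

open Real

theorem sin_four_arctan (r : ℝ) :
    sin (4 * arctan r) = 4 * r * (1 - r ^ 2) / (1 + r ^ 2) ^ 2 := by
  have hsq : √(1 + r ^ 2) ^ 2 = 1 + r ^ 2 := sq_sqrt (by positivity)
  rw [show 4 * arctan r = 2 * (2 * arctan r) by ring, sin_two_mul, sin_two_mul, cos_two_mul,
    sin_arctan, cos_arctan]
  field_simp
  rw [show √(1 + r ^ 2) ^ 4 = (√(1 + r ^ 2) ^ 2) ^ 2 by ring, hsq]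
  ring

theorem deriv_deriv_four_arctan {h h' : ℝ → ℝ} {h'' x : ℝ}
    (hh : ∀ y, HasDerivAt h (h' y) y) (hh' : HasDerivAt h' h'' x) :
    deriv (deriv fun y => 4 * arctan (h y)) x =
      4 * (h'' * (1 + h x ^ 2) - 2 * h x * h' x ^ 2) / (1 + h x ^ 2) ^ 2 := by
  have hd : deriv (fun y => 4 * arctan (h y)) = fun y => 4 * (h' y / (1 + h y ^ 2)) :=
    funext fun y => (((hh y).arctan).const_mul 4).deriv.trans (by ring)
  have hpos : 1 + h x ^ 2 ≠ 0 := by positivity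
  rw [hd]
  refine ((hh'.div (((hh x).pow 2).const_add 1) hpos).const_mul 4).deriv.trans ?_
  simp only [Pi.pow_apply]
  field_simp
  ring

theorem deriv_deriv_four_arctan_sinh_mul_div (a : ℝ) {c : ℝ} (hc : c ≠ 0) (t : ℝ) :
    deriv (deriv fun τ => 4 * arctan (sinh (a * τ) / c)) t =
      4 * a ^ 2 * (sinh (a * t) / c) * (1 - (sinh (a * t) / c) ^ 2 - 2 / c ^ 2) /
        (1 + (sinh (a * t) / c) ^ 2) ^ 2 := by
  have hlin : ∀ τ, HasDerivAt (fun τ => a * τ) a τ := fun τ => by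
    simpa using (hasDerivAt_id τ).const_mul a
  rw [deriv_deriv_four_arctan (fun τ => (hlin τ).sinh.div_const c)
    (((hlin t).cosh.mul_const a).div_const c)]
  have hcosh := cosh_sq (a * t)
  field_simp
  linear_combination (-2 * a ^ 2 * sinh (a * t)) * hcosh

theorem deriv_deriv_four_arctan_div_cosh_mul (k b x : ℝ) :
    deriv (deriv fun y => 4 * arctan (k / cosh (b * y))) x =
      4 * b ^ 2 * (k / cosh (b * x)) * (1 - (k / cosh (b * x)) ^ 2 - 2 / cosh (b * x) ^ 2) /
        (1 + (k / cosh (b * x)) ^ 2) ^ 2 := by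
  have hlin : ∀ y, HasDerivAt (fun y => b * y) b y := fun y => by
    simpa using (hasDerivAt_id y).const_mul b
  have hC : ∀ y, cosh (b * y) ≠ 0 := fun y => (cosh_pos _).ne'
  have hsinh := sinh_sq (b * x)
  have hd : ∀ y, HasDerivAt (fun y => k / cosh (b * y))
      (-(k * b * sinh (b * y)) / cosh (b * y) ^ 2) y := fun y =>
    ((hasDerivAt_const y k).div (hlin y).cosh (hC y)).congr_deriv (by ring)
  have hd' : HasDerivAt (fun y => -(k * b * sinh (b * y)) / cosh (b * y) ^ 2)
      (k * b ^ 2 * (cosh (b * x) ^ 2 - 2) / cosh (b * x) ^ 3) x := by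
    refine ((((hlin x).sinh.const_mul (k * b)).neg).div ((hlin x).cosh.pow 2)
      (pow_ne_zero 2 (hC x))).congr_deriv ?_
    simp only [Pi.pow_apply, Pi.neg_apply]
    field_simp
    linear_combination (2 * k * b ^ 2 * cosh (b * x)) * hsinh
  rw [deriv_deriv_four_arctan hd hd']
  field_simp
  linear_combination (-2 * k ^ 3 * b ^ 2) * hsinh

/-- The kink–antikink function
`u(x,t) = 4 arctan( sinh(γt/√(1−γ²)) / (γ cosh(x/√(1−γ²))) )`
solves the Sine-Gordon equation `u_tt − u_xx + sin u = 0` on all of `ℝ²`. -/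
theorem sine_gordon_kink_antikink_solution
    (γ : ℝ) (hγ0 : 0 < γ) (hγ1 : γ < 1) :
    let s := Real.sqrt (1 - γ ^ 2)
    let u : ℝ → ℝ → ℝ := fun x t =>
      4 * Real.arctan (Real.sinh (γ * t / s) / (γ * Real.cosh (x / s)))
    ∀ x t : ℝ,
      deriv (deriv (fun τ => u x τ)) t
        - deriv (deriv (fun y => u y t)) x
        + Real.sin (u x t) = 0 := by
  intro s u x t
  have hs2 : s ^ 2 = 1 - γ ^ 2 := sq_sqrt (by nlinarith)
  have hs : s ≠ 0 := (sqrt_pos.2 (by nlinarith)).ne'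
  have hC : cosh (x / s) ≠ 0 := (cosh_pos _).ne'
  have htime : (fun τ => u x τ) =
      fun τ => 4 * arctan (sinh (γ / s * τ) / (γ * cosh (x / s))) := by
    simp only [u, mul_div_right_comm]
  have hspace : (fun y => u y t) =
      fun y => 4 * arctan (sinh (γ * t / s) / γ / cosh (s⁻¹ * y)) := by
    simp only [u, div_div, inv_mul_eq_div]
  rw [htime, hspace, deriv_deriv_four_arctan_sinh_mul_div _ (mul_ne_zero hγ0.ne' hC),
    deriv_deriv_four_arctan_div_cosh_mul, sin_four_arctan]
  simp only [← mul_div_right_comm, inv_mul_eq_div, div_div]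
  field_simp
  linear_combination 4 * γ * sinh (γ * t / s) * cosh (x / s) *
    (γ ^ 2 * cosh (x / s) ^ 2 - sinh (γ * t / s) ^ 2) * hs2
end
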